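/- arXiv:2504.06617 — 6 statements merged into one kernel-verified Lean document; each statement's English description precedes it below -/
import Mathlib

section
/- For any tree T with at least 3 vertices, the maximum degree Δ(T) satisfies (1/4)ρ(T)² + 1 < Δ(T) ≤ ρ(T)², where ρ(T) is the spectral radius (largest eigenvalue of the adjacency matrix) of T. -/
open scoped BigOperators

/-- Spectral radius of a finite graph: supremum of real eigenvalues of its adjacency matrix. -/
noncomputable def specRad {V : Type} [Fintype V] [DecidableEq V]
    (G : SimpleGraph V) [DecidableRel G.Adj] : ℝ :=
  sSup {μ : ℝ | Module.End.HasEigenvalue (Matrix.toLin' (G.adjMatrix ℝ)) μ}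

/-!
Both bounds compare `ρ` with quadratic forms: `ρ` is the largest eigenvalue of the symmetric
matrix `A`, hence the maximum of `xᵀAx / xᵀx`, and it is attained at an eigenvector.

Lower bound: at a vertex `r` of degree `Δ` the vector `√Δ • e_r + 1_{N(r)}` has Rayleigh
quotient at least `√Δ`.

Upper bound: root the tree at a leaf `r`, so that every vertex has at most `Δ - 1` children, and
let `c = √(Δ - 1)`. Summing `2ab = a² + c²b² - (a - cb)²` over the edges `{v, parent v}` gives
`c · xᵀAx + c² x_r² + ∑_{v ≠ r} (x_{parent v} - c x_v)² ≤ 2c² xᵀx`, and the defect on the left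
vanishes only if `x_r = 0` and `x_{parent v} = c x_v` for all `v`, i.e. only if `x = 0`.
Hence `ρ < 2√(Δ - 1)`.
-/

open Finset Matrix Module End
open scoped RealInnerProductSpace

namespace Matrix

variable {n : Type*} [Fintype n] [DecidableEq n] {A : Matrix n n ℝ}

theorem hasEigenvalue_toLin'_iff_hasEigenvalue_toEuclideanLin {μ : ℝ} :
    HasEigenvalue (toLin' A) μ ↔ HasEigenvalue (toEuclideanLin A) μ := by
  rw [hasEigenvalue_iff_mem_spectrum, hasEigenvalue_iff_mem_spectrum, spectrum_toLin',
    spectrum_toLpLin]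

theorem bddAbove_range_rayleigh (A : Matrix n n ℝ) :
    BddAbove (Set.range fun x : {x : EuclideanSpace ℝ n // x ≠ 0} =>
      ⟪toEuclideanLin A x, x⟫ / ‖(x : EuclideanSpace ℝ n)‖ ^ 2) := by
  set T := LinearMap.toContinuousLinearMap (toEuclideanLin A)
  exact ⟨‖T‖, by rintro _ ⟨y, rfl⟩; exact (le_abs_self _).trans (T.rayleighQuotient_le_norm y)⟩

theorem IsHermitian.isGreatest_iSup_rayleigh (hA : A.IsHermitian) [Nonempty n] :
    IsGreatest {μ : ℝ | HasEigenvalue (toLin' A) μ}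
      (⨆ x : {x : EuclideanSpace ℝ n // x ≠ 0},
        ⟪toEuclideanLin A x, x⟫ / ‖(x : EuclideanSpace ℝ n)‖ ^ 2) := by
  have hsymm := isSymmetric_toEuclideanLin_iff.mpr hA
  refine ⟨hasEigenvalue_toLin'_iff_hasEigenvalue_toEuclideanLin.mpr
    (by simpa using hsymm.hasEigenvalue_iSup_of_finiteDimensional), fun μ hμ => ?_⟩
  obtain ⟨x, hx, hx0⟩ :=
    (hasEigenvalue_toLin'_iff_hasEigenvalue_toEuclideanLin.mp hμ).exists_hasEigenvector
  refine le_ciSup_of_le (bddAbove_range_rayleigh A) ⟨x, hx0⟩ ?_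
  rw [mem_eigenspace_iff.mp hx, real_inner_smul_left, real_inner_self_eq_norm_sq,
    mul_div_cancel_right₀ _ (by positivity)]

theorem IsHermitian.exists_dotProduct_mulVec_eq_sSup_mul (hA : A.IsHermitian) [Nonempty n] :
    ∃ x ≠ 0, x ⬝ᵥ A *ᵥ x = sSup {μ : ℝ | HasEigenvalue (toLin' A) μ} * (x ⬝ᵥ x) := by
  have hμ := hA.isGreatest_iSup_rayleigh.1
  rw [← hA.isGreatest_iSup_rayleigh.csSup_eq] at hμ
  obtain ⟨x, hx, hx0⟩ := hμ.exists_hasEigenvector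
  refine ⟨x, hx0, ?_⟩
  rw [mem_eigenspace_iff, toLin'_apply] at hx
  rw [hx, dotProduct_smul, smul_eq_mul]

theorem IsHermitian.dotProduct_mulVec_le_sSup_mul (hA : A.IsHermitian) (x : n → ℝ) :
    x ⬝ᵥ A *ᵥ x ≤ sSup {μ : ℝ | HasEigenvalue (toLin' A) μ} * (x ⬝ᵥ x) := by
  rcases eq_or_ne x 0 with rfl | hx
  · simp
  have : Nonempty n := (Function.ne_iff.mp hx).nonempty
  have hx' : WithLp.toLp 2 x ≠ 0 := by simpa using hx
  have hinner : ⟪toEuclideanLin A (WithLp.toLp 2 x), WithLp.toLp 2 x⟫ = x ⬝ᵥ A *ᵥ x := by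
    simp [toLpLin_toLp, EuclideanSpace.inner_toLp_toLp]
  have hnorm : ‖WithLp.toLp 2 x‖ ^ 2 = x ⬝ᵥ x := by
    rw [← real_inner_self_eq_norm_sq, EuclideanSpace.inner_toLp_toLp, star_trivial]
  have hle := le_ciSup (bddAbove_range_rayleigh A) ⟨WithLp.toLp 2 x, hx'⟩
  rw [hinner, hnorm, div_le_iff₀ (hnorm ▸ by positivity)] at hle
  rwa [hA.isGreatest_iSup_rayleigh.csSup_eq]

end Matrix

namespace SimpleGraph

variable {V : Type*} {G : SimpleGraph V}

namespace IsTree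

variable (hT : G.IsTree) (r : V)

noncomputable def pathTo (v : V) : G.Walk v r := (hT.existsUnique_path v r).exists.choose

theorem isPath_pathTo (v : V) : (hT.pathTo r v).IsPath :=
  (hT.existsUnique_path v r).exists.choose_spec

noncomputable def parent (v : V) : V := (hT.pathTo r v).snd

variable {r}

theorem eq_pathTo {v : V} {p : G.Walk v r} (hp : p.IsPath) : p = hT.pathTo r v :=
  (hT.existsUnique_path v r).unique hp (hT.isPath_pathTo r v)

theorem parent_self : hT.parent r r = r := by
  rw [parent, ← hT.eq_pathTo Walk.IsPath.nil]
  rfl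

theorem adj_parent {v : V} (hv : v ≠ r) : G.Adj v (hT.parent r v) :=
  Walk.adj_snd (Walk.not_nil_of_ne hv)

theorem length_pathTo_parent {v : V} (hv : v ≠ r) :
    (hT.pathTo r (hT.parent r v)).length + 1 = (hT.pathTo r v).length := by
  rw [parent, ← hT.eq_pathTo (hT.isPath_pathTo r v).tail,
    Walk.length_tail_add_one (Walk.not_nil_of_ne hv)]

theorem parent_parent_ne {v : V} (hv : v ≠ r) (hpv : hT.parent r v ≠ r) :
    hT.parent r (hT.parent r v) ≠ v := by
  intro h
  have h₁ := hT.length_pathTo_parent hv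
  have h₂ := hT.length_pathTo_parent hpv
  rw [h] at h₂
  omega

theorem adj_iff_parent_eq (r : V) {u v : V} :
    G.Adj u v ↔ (u ≠ r ∧ hT.parent r u = v) ∨ (v ≠ r ∧ hT.parent r v = u) := by
  refine ⟨fun huv => ?_, ?_⟩
  · by_cases hv : v ∈ (hT.pathTo r u).support
    · have hvu : v = hT.parent r u :=
        hT.isAcyclic.eq_snd_of_adj_start (hT.isPath_pathTo r u) huv hv
      refine .inl ⟨?_, hvu.symm⟩
      rintro rfl
      rw [hT.parent_self] at hvu
      exact huv.ne hvu.symm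
    · have hp := hT.eq_pathTo ((hT.isPath_pathTo r u).cons hv (h := huv.symm))
      refine .inr ⟨fun h => hv (h ▸ Walk.end_mem_support _), ?_⟩
      rw [parent, ← hp, Walk.snd_cons]
  · rintro (⟨hu, rfl⟩ | ⟨hv, rfl⟩)
    · exact hT.adj_parent hu
    · exact (hT.adj_parent hv).symm

theorem eq_zero_of_apply_parent_eq_mul {M₀ : Type*} [MulZeroClass M₀] [NoZeroDivisors M₀]
    {x : V → M₀} {c : M₀} (hc : c ≠ 0) (hr : x r = 0)
    (hx : ∀ v ≠ r, x (hT.parent r v) = c * x v) : x = 0 := by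
  funext v
  induction h : (hT.pathTo r v).length using Nat.strong_induction_on generalizing v with
  | _ n ih =>
    by_cases hv : v = r
    · rw [hv, hr]; rfl
    have hlt : (hT.pathTo r (hT.parent r v)).length < n := by
      have := hT.length_pathTo_parent hv
      omega
    simpa [hc, hx v hv] using ih _ hlt (hT.parent r v) rfl

section Finite

variable [Fintype V] [DecidableEq V]

theorem sq_mul_add_sum_sq_sub_parent_pos {c : ℝ} (hc : c ≠ 0) {x : V → ℝ} (hx : x ≠ 0) :
    0 < c ^ 2 * x r ^ 2 + ∑ v ∈ univ.erase r, (x (hT.parent r v) - c * x v) ^ 2 := by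
  have hsum : 0 ≤ ∑ v ∈ univ.erase r, (x (hT.parent r v) - c * x v) ^ 2 :=
    sum_nonneg fun v _ => sq_nonneg _
  refine (add_nonneg (by positivity) hsum).lt_of_ne fun h => hx ?_
  have hr : c ^ 2 * x r ^ 2 = 0 := by linarith [sq_nonneg (c * x r)]
  refine hT.eq_zero_of_apply_parent_eq_mul hc (by simpa [hc] using hr) fun v hv => ?_
  have hzero : ∑ v ∈ univ.erase r, (x (hT.parent r v) - c * x v) ^ 2 = 0 := by linarith
  have hv' := (sum_eq_zero_iff_of_nonneg fun v _ => sq_nonneg _).1 hzero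
    v (mem_erase.2 ⟨hv, mem_univ v⟩)
  simpa [sub_eq_zero] using hv'

variable [DecidableRel G.Adj]

theorem sum_sum_ite_adj (r : V) {M : Type*} [AddCommMonoid M] (f : V → V → M) :
    ∑ u, ∑ v, (if G.Adj u v then f u v else 0) =
      ∑ v ∈ univ.erase r, (f v (hT.parent r v) + f (hT.parent r v) v) := by
  have hsplit : ∀ u v, (if G.Adj u v then f u v else 0) =
      (if u ≠ r ∧ hT.parent r u = v then f u v else 0) +
        (if v ≠ r ∧ hT.parent r v = u then f u v else 0) := by
    intro u v
    by_cases h₁ : u ≠ r ∧ hT.parent r u = v <;> by_cases h₂ : v ≠ r ∧ hT.parent r v = u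
    · exact absurd (by rw [h₁.2, h₂.2]) (hT.parent_parent_ne h₁.1 (h₁.2 ▸ h₂.1))
    all_goals simp [hT.adj_iff_parent_eq r, h₁, h₂]
  simp only [hsplit, sum_add_distrib]
  rw [sum_comm (s := univ) (t := univ) (f := fun u v => if v ≠ r ∧ _ then _ else _)]
  simp only [ite_and, sum_ite_irrel, sum_ite_eq, mem_univ, if_true, sum_const_zero,
    ← sum_filter, filter_ne']

theorem dotProduct_adjMatrix_mulVec (r : V) {R : Type*} [CommSemiring R] (x : V → R) :
    x ⬝ᵥ G.adjMatrix R *ᵥ x = 2 * ∑ v ∈ univ.erase r, x v * x (hT.parent r v) := by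
  have h := hT.sum_sum_ite_adj r (fun u v => x u * x v)
  simp only [dotProduct, mulVec, adjMatrix_apply, mul_sum, ite_mul, one_mul, zero_mul,
    mul_ite, mul_zero] at h ⊢
  rw [h]
  exact sum_congr rfl fun v _ => by ring

theorem card_filter_parent_eq_lt_maxDegree (hr : G.degree r < G.maxDegree) (w : V) :
    #{v ∈ univ.erase r | hT.parent r v = w} < G.maxDegree := by
  have hsub : {v ∈ univ.erase r | hT.parent r v = w} ⊆ G.neighborFinset w := by
    intro v hv
    simp only [mem_filter, mem_erase] at hv
    rw [mem_neighborFinset, ← hv.2]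
    exact (hT.adj_parent hv.1.1).symm
  by_cases hw : w = r
  · subst hw
    exact (card_le_card hsub).trans_lt (by rwa [card_neighborFinset_eq_degree])
  · have hnot : hT.parent r w ∉ {v ∈ univ.erase r | hT.parent r v = w} := by
      simp only [mem_filter, mem_erase]
      exact fun h => hT.parent_parent_ne hw h.1.1 h.2
    have hins : insert (hT.parent r w) {v ∈ univ.erase r | hT.parent r v = w} ⊆
        G.neighborFinset w :=
      insert_subset ((mem_neighborFinset _ _ _).2 (hT.adj_parent hw)) hsub
    have := card_le_card hins
    rw [card_insert_of_notMem hnot, card_neighborFinset_eq_degree] at this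
    exact (Nat.lt_of_succ_le this).trans_le (G.degree_le_maxDegree w)

theorem sum_apply_parent_le (hr : G.degree r < G.maxDegree) {f : V → ℝ} (hf : ∀ v, 0 ≤ f v) :
    ∑ v ∈ univ.erase r, f (hT.parent r v) ≤ (G.maxDegree - 1 : ℝ) * ∑ v, f v := by
  have hcard (w : V) : (#{v ∈ univ.erase r | hT.parent r v = w} : ℝ) ≤ G.maxDegree - 1 := by
    rw [le_sub_iff_add_le]
    exact_mod_cast hT.card_filter_parent_eq_lt_maxDegree hr w
  rw [sum_comp, mul_sum]
  calc _ ≤ ∑ w ∈ (univ.erase r).image (hT.parent r), (G.maxDegree - 1 : ℝ) * f w :=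
        sum_le_sum fun w _ => by
          rw [nsmul_eq_mul]
          exact mul_le_mul_of_nonneg_right (hcard w) (hf w)
    _ ≤ _ := sum_le_sum_of_subset_of_nonneg (subset_univ _)
        fun w _ _ => mul_nonneg ((Nat.cast_nonneg _).trans (hcard w)) (hf w)

theorem mul_dotProduct_adjMatrix_mulVec_add_le (hr : G.degree r < G.maxDegree) {c : ℝ}
    (hc : c ^ 2 = G.maxDegree - 1) (x : V → ℝ) :
    c * (x ⬝ᵥ G.adjMatrix ℝ *ᵥ x) +
        (c ^ 2 * x r ^ 2 + ∑ v ∈ univ.erase r, (x (hT.parent r v) - c * x v) ^ 2) ≤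
      2 * c ^ 2 * (x ⬝ᵥ x) := by
  have hdot : x ⬝ᵥ x = ∑ v, x v ^ 2 := by simp only [dotProduct, sq]
  have hsplit : ∑ v, x v ^ 2 = x r ^ 2 + ∑ v ∈ univ.erase r, x v ^ 2 :=
    (add_sum_erase _ (fun v => x v ^ 2) (mem_univ r)).symm
  have hquad : c * (x ⬝ᵥ G.adjMatrix ℝ *ᵥ x) =
      ∑ v ∈ univ.erase r, x (hT.parent r v) ^ 2 + c ^ 2 * ∑ v ∈ univ.erase r, x v ^ 2 -
        ∑ v ∈ univ.erase r, (x (hT.parent r v) - c * x v) ^ 2 := by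
    rw [hT.dotProduct_adjMatrix_mulVec r, mul_sum, mul_sum, mul_sum, ← sum_add_distrib,
      ← sum_sub_distrib]
    exact sum_congr rfl fun v _ => by ring
  have hparent := hT.sum_apply_parent_le hr fun v => sq_nonneg (x v)
  rw [← hc, hsplit] at hparent
  rw [hquad, hdot, hsplit]
  linear_combination hparent

end Finite

end IsTree

section Finite

variable [Fintype V] [DecidableRel G.Adj]

theorem IsTree.two_le_maxDegree (hT : G.IsTree) (hV : 3 ≤ Fintype.card V) : 2 ≤ G.maxDegree := by
  by_contra! h
  have hsum := G.sum_degrees_eq_twice_card_edges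
  have hcard := hT.card_edgeFinset
  have : ∑ v, G.degree v ≤ ∑ _v : V, 1 :=
    sum_le_sum fun v _ => Nat.le_of_lt_succ ((G.degree_le_maxDegree v).trans_lt h)
  simp only [sum_const, card_univ, smul_eq_mul, mul_one] at this
  omega

variable [DecidableEq V]

theorem IsTree.dotProduct_adjMatrix_mulVec_lt (hT : G.IsTree) (hΔ : 2 ≤ G.maxDegree)
    {x : V → ℝ} (hx : x ≠ 0) :
    x ⬝ᵥ G.adjMatrix ℝ *ᵥ x < 2 * √(G.maxDegree - 1) * (x ⬝ᵥ x) := by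
  have : Nontrivial V := by
    have : Nonempty V := (Function.ne_iff.mp hx).nonempty
    obtain ⟨w, hw⟩ := G.exists_maximal_degree_vertex
    obtain ⟨u, hu⟩ := (G.degree_pos_iff_exists_adj w).1 (by omega)
    exact ⟨⟨w, u, hu.ne⟩⟩
  obtain ⟨r, hr⟩ := hT.exists_vert_degree_one_of_nontrivial
  have hΔ' : (1 : ℝ) < G.maxDegree := by exact_mod_cast hΔ
  set c := √(G.maxDegree - 1 : ℝ)
  have hc : 0 < c := Real.sqrt_pos.2 (by linarith)
  have hle := hT.mul_dotProduct_adjMatrix_mulVec_add_le (r := r) (by omega)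
    (Real.sq_sqrt (by linarith)) x
  have hpos := hT.sq_mul_add_sum_sq_sub_parent_pos (r := r) hc.ne' hx
  refine lt_of_mul_lt_mul_left ?_ hc.le
  linear_combination hle + hpos

theorem IsTree.sqrt_degree_le (hT : G.IsTree) {r : V} {ρ : ℝ}
    (hρ : ∀ x : V → ℝ, x ⬝ᵥ G.adjMatrix ℝ *ᵥ x ≤ ρ * (x ⬝ᵥ x)) (hr : 0 < G.degree r) :
    √(G.degree r) ≤ ρ := by
  set d : ℝ := (G.degree r : ℝ)
  have hd : 0 < d := Nat.cast_pos.2 hr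
  set x : V → ℝ := fun v => if v = r then √d else if G.Adj r v then 1 else 0
  have hx0 : ∀ v, 0 ≤ x v := fun v => by dsimp only [x]; split_ifs <;> positivity
  have hnbr : ∀ v ∈ G.neighborFinset r, x v = 1 ∧ hT.parent r v = r := by
    intro v hv
    rw [mem_neighborFinset] at hv
    have := (hT.adj_iff_parent_eq r).1 hv.symm
    simp_all [x, hv.ne']
  have hxx : x ⬝ᵥ x = 2 * d := by
    have hsq : ∀ v, x v * x v = (if v = r then d else 0) + if G.Adj r v then 1 else 0 := by
      intro v
      by_cases hv : v = r
      · simp [x, hv, hd.le]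
      · simp [x, hv]
    simp only [dotProduct, hsq, sum_add_distrib, sum_ite_eq', mem_univ, if_true, sum_boole]
    rw [← neighborFinset_eq_filter, card_neighborFinset_eq_degree]
    ring
  have hxAx : 2 * d * √d ≤ x ⬝ᵥ G.adjMatrix ℝ *ᵥ x := by
    have hsub : G.neighborFinset r ⊆ univ.erase r := fun v hv =>
      mem_erase.2 ⟨((mem_neighborFinset _ _ _).1 hv).ne', mem_univ v⟩
    calc 2 * d * √d = 2 * ∑ v ∈ G.neighborFinset r, x v * x (hT.parent r v) := by
          rw [sum_congr rfl fun v hv => by rw [(hnbr v hv).1, (hnbr v hv).2]]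
          simp [x, d, mul_assoc]
      _ ≤ 2 * ∑ v ∈ univ.erase r, x v * x (hT.parent r v) :=
          mul_le_mul_of_nonneg_left (sum_le_sum_of_subset_of_nonneg hsub
            fun v _ _ => mul_nonneg (hx0 _) (hx0 _)) zero_le_two
      _ = _ := (hT.dotProduct_adjMatrix_mulVec r x).symm
  have h := hxAx.trans (hρ x)
  rw [hxx, mul_comm ρ] at h
  exact le_of_mul_le_mul_left h (by positivity)

end Finite

end SimpleGraph

theorem stmt_0 {V : Type} [Fintype V] [DecidableEq V] (G : SimpleGraph V)
    [DecidableRel G.Adj] (hT : G.IsTree) (h3 : 3 ≤ Fintype.card V) :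
    (1 / 4) * (specRad G) ^ 2 + 1 < (G.maxDegree : ℝ) ∧
      (G.maxDegree : ℝ) ≤ (specRad G) ^ 2 := by
  have hΔ := hT.two_le_maxDegree h3
  have : Nonempty V := Fintype.card_pos_iff.1 (by omega)
  have hA := G.isHermitian_adjMatrix ℝ
  obtain ⟨r, hr⟩ := G.exists_maximal_degree_vertex
  have hlow : √(G.maxDegree : ℝ) ≤ specRad G :=
    hr ▸ hT.sqrt_degree_le hA.dotProduct_mulVec_le_sSup_mul (r := r) (by omega)
  obtain ⟨x, hx, hρx⟩ := hA.exists_dotProduct_mulVec_eq_sSup_mul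
  have hup : specRad G < 2 * √(G.maxDegree - 1 : ℝ) := by
    have h := hT.dotProduct_adjMatrix_mulVec_lt hΔ hx
    rw [hρx] at h
    exact lt_of_mul_lt_mul_right h (by simpa using (dotProduct_star_self_pos_iff.2 hx).le)
  have hΔ' : (2 : ℝ) ≤ G.maxDegree := by exact_mod_cast hΔ
  have hc := Real.sq_sqrt (by linarith : (0 : ℝ) ≤ G.maxDegree - 1)
  have hρ : 0 ≤ specRad G := (Real.sqrt_nonneg _).trans hlow
  constructor
  · nlinarith [Real.sqrt_nonneg (G.maxDegree - 1 : ℝ)]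
  · exact (Real.sqrt_le_iff.1 hlow).2
end

section
/- The set W_2(√2) equals {0, √2, 1/√2}. -/
open scoped BigOperators

/-- `W r α` : the smallest set of nonneg reals containing `α` and closed under the
multiset rule from the paper. -/
inductive W (r : ℕ) (α : ℝ) : ℝ → Prop
  | base : W r α α
  | step (s : ℕ) (q : Fin s → ℝ) (β : ℝ)
      (hq : ∀ i, W r α (q i)) (hqpos : ∀ i, 0 < q i)
      (hβeq : β = α - ∑ i, (q i)⁻¹) (hβ0 : 0 ≤ β)
      (hs1 : 1 ≤ s) (hs : (s : ℤ) ≤ (r : ℤ) - ⌈β / (β + 1)⌉) : W r α β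


theorem stmt_4 :
    ∀ x : ℝ, W 2 (Real.sqrt 2) x ↔
      (x = 0 ∨ x = Real.sqrt 2 ∨ x = (Real.sqrt 2)⁻¹) := by
  have h2 : Real.sqrt 2 * Real.sqrt 2 = 2 := Real.mul_self_sqrt (by norm_num)
  have hpos : (0:ℝ) < Real.sqrt 2 := Real.sqrt_pos.mpr (by norm_num)
  have hval : Real.sqrt 2 - (Real.sqrt 2)⁻¹ = (Real.sqrt 2)⁻¹ := by
    field_simp
    nlinarith [h2]
  intro x
  constructor
  · intro hx
    induction hx with
    | base => exact Or.inr (Or.inl rfl)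
    | step s q β hq hqpos hβeq hβ0 hs1 hs ih =>
      have hinv : ∀ i, (Real.sqrt 2)⁻¹ ≤ (q i)⁻¹ := by
        intro i
        rcases ih i with h0 | h | h
        · exact absurd h0 (ne_of_gt (hqpos i))
        · rw [h]
        · rw [h, inv_inv]
          have : (Real.sqrt 2)⁻¹ ≤ 1 := by
            rw [inv_le_one_iff₀]
            right
            nlinarith [h2, hpos]
          nlinarith [h2, hpos, this]
      rcases eq_or_lt_of_le hs1 with h1 | h2s
      · -- s = 1
        subst h1
        rw [Fin.sum_univ_one] at hβeq
        rcases ih 0 with h0 | h | h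
        · exact absurd h0 (ne_of_gt (hqpos 0))
        · right; right
          rw [hβeq, h, hval]
        · left
          rw [hβeq, h, inv_inv]
          ring
      · -- s ≥ 2
        left
        have hsum : (s : ℝ) * (Real.sqrt 2)⁻¹ ≤ ∑ i, (q i)⁻¹ := by
          calc (s : ℝ) * (Real.sqrt 2)⁻¹ = ∑ _i : Fin s, (Real.sqrt 2)⁻¹ := by
                simp [Finset.sum_const, mul_comm]
            _ ≤ ∑ i, (q i)⁻¹ := Finset.sum_le_sum fun i _ => hinv i
        have hs2 : (2:ℝ) ≤ (s : ℝ) := by exact_mod_cast h2s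
        have hinvpos : (0:ℝ) < (Real.sqrt 2)⁻¹ := by positivity
        have : Real.sqrt 2 ≤ ∑ i, (q i)⁻¹ := by
          nlinarith [hsum, hs2, hinvpos, h2, hpos]
        linarith [hβ0, hβeq.ge, hβeq.le]
  · intro hx
    have hW2 : W 2 (Real.sqrt 2) (Real.sqrt 2) := W.base
    have hWinv : W 2 (Real.sqrt 2) ((Real.sqrt 2)⁻¹) := by
      refine W.step 1 (fun _ => Real.sqrt 2) _ (fun _ => hW2) (fun _ => hpos) ?_ ?_ le_rfl ?_
      · rw [Fin.sum_univ_one, hval]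
      · positivity
      · have hle : (Real.sqrt 2)⁻¹ / ((Real.sqrt 2)⁻¹ + 1) ≤ 1 := by
          rw [div_le_one (by positivity)]
          linarith
        have : ⌈(Real.sqrt 2)⁻¹ / ((Real.sqrt 2)⁻¹ + 1)⌉ ≤ 1 := by
          exact Int.ceil_le.mpr (by exact_mod_cast hle)
        push_cast
        omega
    have hW0 : W 2 (Real.sqrt 2) 0 := by
      refine W.step 1 (fun _ => (Real.sqrt 2)⁻¹) _ (fun _ => hWinv)
        (fun _ => by positivity) ?_ le_rfl le_rfl ?_
      · rw [Fin.sum_univ_one, inv_inv]; ring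
      · norm_num
    rcases hx with h | h | h <;> rw [h]
    · exact hW0
    · exact hW2
    · exact hWinv
end

section
/- Let T be a tree with at least 2 vertices, α = ρ(T), r = Δ(T), and let φ : V(T) → ℝ⁺ be a positive eigenvector of the adjacency matrix of T with eigenvalue α. Then for every edge u₁u₂ of T, both φ(u₁)/φ(u₂) and φ(u₂)/φ(u₁) belong to W_r(α). -/
open scoped BigOperators

namespace TreeAux

variable {V : Type} [Fintype V] [DecidableEq V] {G : SimpleGraph V}

/-- If `y` lies on a walk `p : a → x`, then `dist a y + dist y x ≤ p.length`. -/
lemma dist_add_dist_le_of_mem_support {a x y : V} (p : G.Walk a x) (hy : y ∈ p.support) :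
    G.dist a y + G.dist y x ≤ p.length := by
  have h1 := SimpleGraph.dist_le (p.takeUntil y hy)
  have h2 := SimpleGraph.dist_le (p.dropUntil y hy)
  have h3 : (p.takeUntil y hy).length + (p.dropUntil y hy).length = p.length := by
    rw [← SimpleGraph.Walk.length_append, p.take_spec hy]
  omega

/-- Key geometric lemma: in a tree, if `u~v`, `u~w`, `w ≠ v`, then any vertex strictly
closer to `w` than to `u` is strictly closer to `u` than to `v`. -/
lemma key (hT : G.IsTree) {u v w x : V} (huv : G.Adj u v) (huw : G.Adj u w)
    (hwv : w ≠ v) (hx : G.dist x w < G.dist x u) : G.dist x u < G.dist x v := by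
  have hconn := hT.isConnected
  by_contra hle
  push_neg at hle
  have hwu1 : G.dist w u = 1 := SimpleGraph.dist_eq_one_iff_adj.mpr huw.symm
  have hvu1 : G.dist v u = 1 := SimpleGraph.dist_eq_one_iff_adj.mpr huv.symm
  have htri1 : G.dist x u ≤ G.dist x w + 1 := by
    have := hconn.dist_triangle (u := x) (v := w) (w := u); omega
  have htri2 : G.dist x u ≤ G.dist x v + 1 := by
    have := hconn.dist_triangle (u := x) (v := v) (w := u); omega
  have hxw : G.dist x w + 1 = G.dist x u := by omega
  obtain ⟨pw, hpw, hpwl⟩ := hconn.exists_path_of_dist w x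
  have hpwl' : pw.length + 1 = G.dist x u := by rw [hpwl, SimpleGraph.dist_comm]; exact hxw
  obtain ⟨pv, hpv, hpvl⟩ := hconn.exists_path_of_dist v x
  have hpvl' : pv.length = G.dist x v := by rw [hpvl, SimpleGraph.dist_comm]
  have hupw : u ∉ pw.support := by
    intro h
    have := dist_add_dist_le_of_mem_support pw h
    rw [hwu1, SimpleGraph.dist_comm (u := u) (v := x)] at this
    omega
  have hP1 : (SimpleGraph.Walk.cons huw pw).IsPath := hpw.cons hupw
  rcases Nat.lt_or_ge (G.dist x v) (G.dist x u) with hcase | hcase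
  · -- dist x v = dist x u - 1 : two distinct paths u → x
    have hupv : u ∉ pv.support := by
      intro h
      have := dist_add_dist_le_of_mem_support pv h
      rw [hvu1, SimpleGraph.dist_comm (u := u) (v := x)] at this
      omega
    have hP2 : (SimpleGraph.Walk.cons huv pv).IsPath := hpv.cons hupv
    obtain ⟨p₀, -, hup⟩ := hT.existsUnique_path u x
    have hEq : SimpleGraph.Walk.cons huw pw = SimpleGraph.Walk.cons huv pv :=
      (hup _ hP1).trans (hup _ hP2).symm
    have hsup := congrArg SimpleGraph.Walk.support hEq
    rw [SimpleGraph.Walk.support_cons, SimpleGraph.Walk.support_cons] at hsup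
    have hsup' : pw.support = pv.support := by injection hsup
    rw [SimpleGraph.Walk.support_eq_cons pw, SimpleGraph.Walk.support_eq_cons pv] at hsup'
    exact hwv (by injection hsup')
  · -- dist x v = dist x u : a too-long path v → x
    have hxveq : G.dist x v = G.dist x u := le_antisymm hle hcase
    have hvpw : v ∉ pw.support := by
      intro h
      have := dist_add_dist_le_of_mem_support pw h
      have hwv1 : 1 ≤ G.dist w v := hconn.pos_dist_of_ne hwv
      rw [SimpleGraph.dist_comm (u := v) (v := x)] at this
      omega
    have hvP1 : v ∉ (SimpleGraph.Walk.cons huw pw).support := by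
      rw [SimpleGraph.Walk.support_cons]
      intro h
      rcases List.mem_cons.mp h with h | h
      · exact huv.ne' h
      · exact hvpw h
    have hQ : (SimpleGraph.Walk.cons huv.symm (SimpleGraph.Walk.cons huw pw)).IsPath :=
      hP1.cons hvP1
    obtain ⟨p₀, -, hup⟩ := hT.existsUnique_path v x
    have hEq : SimpleGraph.Walk.cons huv.symm (SimpleGraph.Walk.cons huw pw) = pv :=
      (hup _ hQ).trans (hup _ hpv).symm
    have := congrArg SimpleGraph.Walk.length hEq
    rw [SimpleGraph.Walk.length_cons, SimpleGraph.Walk.length_cons] at this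
    omega

variable [DecidableRel G.Adj]

/-- The main recursion: for a directed edge `(u,v)`, the ratio `φ v / φ u` lies in `W r α`,
by strong induction on the size of the branch at `u` away from `v`. -/
lemma main (hT : G.IsTree) {r : ℕ} (hr : ∀ y, G.degree y ≤ r) {α : ℝ} {φ : V → ℝ}
    (hφpos : ∀ u, 0 < φ u) (hφ : ∀ u, α * φ u = ∑ w ∈ G.neighborFinset u, φ w) :
    ∀ n (u v : V), G.Adj u v →
      (Finset.univ.filter (fun x => G.dist x u < G.dist x v)).card ≤ n →
      W r α (φ v / φ u) := by
  have hconn := hT.isConnected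
  intro n
  induction n with
  | zero =>
    intro u v huv hcard
    exfalso
    have hu : u ∈ Finset.univ.filter (fun x => G.dist x u < G.dist x v) := by
      simp only [Finset.mem_filter, Finset.mem_univ, true_and, SimpleGraph.dist_self]
      exact hconn.pos_dist_of_ne huv.ne
    have := Finset.card_pos.mpr ⟨u, hu⟩
    omega
  | succ n IH =>
    intro u v huv hcard
    have hφu : φ u ≠ 0 := (hφpos u).ne'
    have hvmem : v ∈ G.neighborFinset u := by
      rw [SimpleGraph.mem_neighborFinset]; exact huv
    set t := (G.neighborFinset u).erase v with ht
    have hsum : φ v + ∑ w ∈ t, φ w = α * φ u := by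
      rw [hφ u]; exact Finset.add_sum_erase _ φ hvmem
    by_cases hs0 : t.card = 0
    · rw [Finset.card_eq_zero] at hs0
      rw [hs0, Finset.sum_empty] at hsum
      have : φ v / φ u = α := by field_simp; linarith
      rw [this]; exact W.base
    · have hs1 : 1 ≤ t.card := Nat.one_le_iff_ne_zero.mpr hs0
      have hwprop : ∀ w ∈ t, G.Adj u w ∧ w ≠ v := by
        intro w hw
        rw [ht, Finset.mem_erase, SimpleGraph.mem_neighborFinset] at hw
        exact ⟨hw.2, hw.1⟩
      have hwcard : ∀ w ∈ t,
          (Finset.univ.filter (fun x => G.dist x w < G.dist x u)).card ≤ n := by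
        intro w hw
        obtain ⟨huw, hwv⟩ := hwprop w hw
        have hss : Finset.univ.filter (fun x => G.dist x w < G.dist x u) ⊂
            Finset.univ.filter (fun x => G.dist x u < G.dist x v) := by
          constructor
          · intro x hx
            simp only [Finset.mem_filter, Finset.mem_univ, true_and] at hx ⊢
            exact TreeAux.key hT huv huw hwv hx
          · intro hsub
            have hu : u ∈ Finset.univ.filter (fun x => G.dist x u < G.dist x v) := by
              simp only [Finset.mem_filter, Finset.mem_univ, true_and,
                SimpleGraph.dist_self]
              exact hconn.pos_dist_of_ne huv.ne
            have := hsub hu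
            simp only [Finset.mem_filter, Finset.mem_univ, true_and,
              SimpleGraph.dist_self] at this
            omega
        have := Finset.card_lt_card hss
        omega
      set e := t.equivFin with he
      have hβpos : 0 < φ v / φ u := div_pos (hφpos v) (hφpos u)
      refine W.step t.card (fun i => φ u / φ (e.symm i : V)) _ ?_ ?_ ?_ hβpos.le hs1 ?_
      · intro i
        obtain ⟨huw, hwv⟩ := hwprop _ (e.symm i).2
        exact IH _ _ huw.symm (hwcard _ (e.symm i).2)
      · intro i; exact div_pos (hφpos u) (hφpos _)
      · have hsum2 : ∑ i, (φ u / φ ((e.symm i : t) : V))⁻¹ = ∑ w ∈ t, φ w / φ u := by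
          rw [← Finset.sum_coe_sort t (fun w => φ (w : V) / φ u)]
          rw [← Equiv.sum_comp e.symm (fun a : t => φ (a : V) / φ u)]
          congr 1; funext i; rw [inv_div]
        rw [hsum2, ← Finset.sum_div]
        field_simp
        linarith
      · have hceil : ⌈(φ v / φ u) / (φ v / φ u + 1)⌉ ≤ 1 := by
          rw [Int.ceil_le]
          push_cast
          rw [div_le_one (by linarith)]
          linarith
        have hdeg : t.card + 1 = G.degree u := Finset.card_erase_add_one hvmem
        have hdr : G.degree u ≤ r := hr u
        have : (t.card : ℤ) + 1 ≤ (r : ℤ) := by exact_mod_cast hdeg ▸ hdr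
        linarith

end TreeAux

theorem stmt_8 {V : Type} [Fintype V] [DecidableEq V] (G : SimpleGraph V)
    [DecidableRel G.Adj] (hT : G.IsTree) (h2 : 2 ≤ Fintype.card V)
    (α : ℝ) (hαdef : α = specRad G) (r : ℕ) (hrdef : r = G.maxDegree)
    (φ : V → ℝ) (hφpos : ∀ u, 0 < φ u)
    (hφ : ∀ u, α * φ u = ∑ w ∈ G.neighborFinset u, φ w) :
    ∀ u₁ u₂ : V, G.Adj u₁ u₂ →
      W r α (φ u₁ / φ u₂) ∧ W r α (φ u₂ / φ u₁) := by
  intro u₁ u₂ h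
  have hr : ∀ y, G.degree y ≤ r := fun y => hrdef ▸ G.degree_le_maxDegree y
  have hbound : ∀ (a b : V),
      (Finset.univ.filter (fun x => G.dist x a < G.dist x b)).card ≤ Fintype.card V :=
    fun a b => le_trans (Finset.card_filter_le _ _) (by simp)
  exact ⟨TreeAux.main hT hr hφpos hφ (Fintype.card V) u₂ u₁ h.symm (hbound _ _),
    TreeAux.main hT hr hφpos hφ (Fintype.card V) u₁ u₂ h (hbound _ _)⟩
end

section
/- For every positive integer m and every positive integer i, (i+1)/i · √m ∈ W_{m+2}(2√m). -/
open scoped BigOperators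

theorem stmt_10 (m i : ℕ) (hm : 0 < m) (hi : 0 < i) :
    W (m + 2) (2 * Real.sqrt m) (((i : ℝ) + 1) / i * Real.sqrt m) := by
  have hm0 : (0:ℝ) < m := by exact_mod_cast hm
  have hsm : 0 < Real.sqrt m := Real.sqrt_pos.mpr hm0
  have hsmm : Real.sqrt m * Real.sqrt m = m := Real.mul_self_sqrt hm0.le
  induction i, hi using Nat.le_induction with
  | base =>
    have h : (((1:ℕ):ℝ) + 1) / ((1:ℕ):ℝ) * Real.sqrt m = 2 * Real.sqrt m := by
      norm_num
    rw [h]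
    exact W.base
  | succ n hn ih =>
    have hn0 : (0:ℝ) < n := by exact_mod_cast hn
    have hqpos : (0:ℝ) < ((n:ℝ) + 1) / n * Real.sqrt m := by positivity
    have hβpos : (0:ℝ) < ((n:ℕ)+1 : ℝ) / ((n:ℕ)+1 : ℝ) * Real.sqrt m := by positivity
    refine W.step m (fun _ => ((n:ℝ) + 1) / n * Real.sqrt m)
      _ (fun _ => ih) (fun _ => hqpos) ?_ (by positivity) hm ?_
    · push_cast
      rw [Finset.sum_const, Finset.card_univ, Fintype.card_fin, nsmul_eq_mul]
      field_simp
      ring_nf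
      nlinarith [hsmm, hsm, hn0]
    · push_cast
      set β := ((n:ℝ) + 1 + 1) / ((n:ℝ) + 1) * Real.sqrt m with hβ
      have hb0 : (0:ℝ) ≤ β := by rw [hβ]; positivity
      have h1 : β / (β + 1) ≤ 1 := by
        rw [div_le_one (by linarith)]
        linarith
      have h2 : ⌈β / (β + 1)⌉ ≤ 1 := Int.ceil_le.mpr (by simpa using h1)
      omega
end

section
/- For every positive integer m and every integer s with m ≤ s ≤ 4m, s/(2√m) ∈ W_{m+2}(2√m). -/
open scoped BigOperators

/-!
Measure everything in units of `1 / α`, where `α ^ 2 = 4m`: if the `x / α` lie in `W`, so does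
`(4m - ∑ 4m / x) / α`. It therefore suffices to reach the numerators `m`, `2m` and `4m` (weights
`4m / x = 4, 2, 1`), since every `4m - s ≤ 3m` is a sum of at most `m + 1` such weights, and
`4m / α = α` is the base point. The numbers `ladder m u = 2m(u + 1)/u` satisfy
`ladder m (u + 1) = 4m - m · 4m / ladder m u`. Climbing from `ladder m 1 = 4m` reaches
`ladder m m = 2(m + 1)`, and `m + 1` copies of it give `2m`; `m + 1` copies of `2m` give
`2(m - 1) = ladder m (-m)`, and climbing from there reaches `ladder m (-2) = m`.
-/

lemma ceil_div_add_one_le_one {β : ℝ} (hβ : 0 ≤ β) : ⌈β / (β + 1)⌉ ≤ 1 := by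
  rw [Int.ceil_le, Int.cast_one, div_le_one (by linarith)]
  linarith

noncomputable def ladder (m : ℕ) (u : ℤ) : ℝ := 2 * m * (u + 1) / u

lemma ladder_nonneg (m : ℕ) (u : ℤ) : 0 ≤ ladder m u := by
  unfold ladder
  rcases le_or_gt 0 u with hu | hu
  · positivity
  · have hu' : (u : ℝ) + 1 ≤ 0 := by exact_mod_cast (show u + 1 ≤ 0 by omega)
    exact div_nonneg_of_nonpos (mul_nonpos_of_nonneg_of_nonpos (by positivity) hu')
      (by exact_mod_cast hu.le)

lemma ladder_pos {m : ℕ} (hm : 0 < m) {u : ℤ} (hu : 1 ≤ u ∨ u ≤ -2) : 0 < ladder m u := by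
  unfold ladder
  have hm' : (0 : ℝ) < m := by exact_mod_cast hm
  rcases hu with hu | hu
  · have hu' : (1 : ℝ) ≤ u := by exact_mod_cast hu
    exact div_pos (by positivity) (by linarith)
  · have hu' : (u : ℝ) ≤ -2 := by exact_mod_cast hu
    exact div_pos_of_neg_of_neg (mul_neg_of_pos_of_neg (by positivity) (by linarith))
      (by linarith)

lemma ladder_succ {m : ℕ} (hm : 0 < m) {u : ℤ} (hu : 1 ≤ u ∨ u ≤ -2) :
    ladder m (u + 1) = 4 * m - m * (4 * m / ladder m u) := by
  have hu0 : (u : ℝ) ≠ 0 := by exact_mod_cast (show u ≠ 0 by omega)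
  have hu1 : (u : ℝ) + 1 ≠ 0 := by exact_mod_cast (show u + 1 ≠ 0 by omega)
  unfold ladder
  push_cast
  field_simp
  ring

lemma ladder_one (m : ℕ) : ladder m 1 = 4 * m := by
  unfold ladder; norm_num; ring

lemma ladder_natCast {m : ℕ} (hm : 0 < m) : ladder m m = 2 * (m + 1) := by
  unfold ladder
  push_cast
  field_simp

lemma ladder_neg_natCast {m : ℕ} (hm : 0 < m) : ladder m (-m) = 2 * (m - 1) := by
  unfold ladder
  push_cast
  field_simp
  ring

lemma ladder_neg_two (m : ℕ) : ladder m (-2) = m := by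
  unfold ladder; norm_num

lemma natCast_pos_of_sq_eq {α : ℝ} {m : ℕ} (hα : 0 < α) (hαsq : α ^ 2 = 4 * m) : 0 < m := by
  have : (0 : ℝ) < m := by nlinarith
  exact_mod_cast this

namespace W

variable {r m : ℕ} {α : ℝ}

theorem of_multiset {β : ℝ} (Q : Multiset ℝ) (hQ : ∀ q ∈ Q, W r α q)
    (hQpos : ∀ q ∈ Q, 0 < q) (hβ : β = α - (Q.map (·⁻¹)).sum) (hβ0 : 0 ≤ β)
    (hQ0 : 0 < Q.card) (hQr : Q.card + 1 ≤ r) : W r α β := by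
  obtain ⟨l, rfl⟩ := Quot.exists_rep Q
  have hsum : ∑ i : Fin l.length, (l[i])⁻¹ = (l.map (·⁻¹)).sum := by
    rw [← List.sum_ofFn]
    conv_rhs => rw [← List.ofFn_getElem (xs := l), List.map_ofFn]
    rfl
  refine step l.length (fun i => l[i]) β (fun i => hQ _ (List.getElem_mem _))
    (fun i => hQpos _ (List.getElem_mem _)) (by rw [hsum]; simpa using hβ) hβ0 hQ0 ?_
  have hceil := ceil_div_add_one_le_one hβ0
  have hlen : l.length + 1 ≤ r := hQr
  omega

theorem div_of_multiset (hα : 0 < α) {v : ℝ} (Q : Multiset ℝ) (hQ : ∀ x ∈ Q, W r α (x / α))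
    (hQpos : ∀ x ∈ Q, 0 < x) (hv : v = α ^ 2 - (Q.map (α ^ 2 / ·)).sum) (hv0 : 0 ≤ v)
    (hQ0 : 0 < Q.card) (hQr : Q.card + 1 ≤ r) : W r α (v / α) := by
  refine of_multiset (Q.map (· / α)) (by simpa using hQ)
    (by simpa using fun x hx => div_pos (hQpos x hx) hα) ?_ (div_nonneg hv0 hα.le)
    (by simpa using hQ0) (by simpa using hQr)
  have hmap : (Q.map (α ^ 2 / ·)) = Q.map (fun x => α * (α / x)) := by
    congr 1; ext x; ring
  rw [hv, hmap, Multiset.sum_map_mul_left, Multiset.map_map]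
  simp only [Function.comp_def, inv_div]
  field_simp

theorem div_of_replicate (hα : 0 < α) {x v : ℝ} {n : ℕ} (hx : W r α (x / α)) (hx0 : 0 < x)
    (hv : v = α ^ 2 - n * (α ^ 2 / x)) (hv0 : 0 ≤ v) (hn : 0 < n) (hnr : n + 1 ≤ r) :
    W r α (v / α) :=
  div_of_multiset hα (Multiset.replicate n x)
    (fun y hy => (Multiset.eq_of_mem_replicate hy).symm ▸ hx)
    (fun y hy => (Multiset.eq_of_mem_replicate hy).symm ▸ hx0)
    (by rw [hv, Multiset.map_replicate, Multiset.sum_replicate, nsmul_eq_mul]) hv0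
    (by simpa using hn) (by simpa using hnr)

theorem div_self_sq (hα : 0 < α) : W r α (α ^ 2 / α) := by
  rw [sq, mul_div_cancel_right₀ _ hα.ne']
  exact base

theorem ladder_div_succ (hα : 0 < α) (hαsq : α ^ 2 = 4 * m) (hr : m + 2 ≤ r) {u : ℤ}
    (hu : 1 ≤ u ∨ u ≤ -2) (h : W r α (ladder m u / α)) : W r α (ladder m (u + 1) / α) := by
  have hm := natCast_pos_of_sq_eq hα hαsq
  exact div_of_replicate hα h (ladder_pos hm hu) (by rw [ladder_succ hm hu, hαsq])
    (ladder_nonneg m _) hm (by omega)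

theorem ladder_div_of_le (hα : 0 < α) (hαsq : α ^ 2 = 4 * m) (hr : m + 2 ≤ r) {u v : ℤ}
    (h : W r α (ladder m u / α)) (huv : u ≤ v) (hsign : 1 ≤ u ∨ v ≤ -1) :
    W r α (ladder m v / α) := by
  induction v, huv using Int.leInduction with
  | base => exact h
  | succ w huw ih => exact ladder_div_succ hα hαsq hr (by omega) (ih (by omega))

theorem ladder_div (hα : 0 < α) (hαsq : α ^ 2 = 4 * m) (hr : m + 2 ≤ r) {k : ℤ} (hk : 1 ≤ k) :
    W r α (ladder m k / α) :=
  ladder_div_of_le hα hαsq hr (by rw [ladder_one, ← hαsq]; exact div_self_sq hα) hk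
    (Or.inl le_rfl)

theorem two_mul_div (hα : 0 < α) (hαsq : α ^ 2 = 4 * m) (hr : m + 2 ≤ r) :
    W r α (2 * m / α) := by
  have hm := natCast_pos_of_sq_eq hα hαsq
  refine div_of_replicate (n := m + 1) hα (ladder_div hα hαsq hr (k := m) (by omega))
    (ladder_pos hm (by omega)) ?_ (by positivity) (by omega) (by omega)
  rw [ladder_natCast hm, hαsq]
  push_cast
  field_simp
  ring

theorem natCast_div (hα : 0 < α) (hαsq : α ^ 2 = 4 * m) (hr : m + 2 ≤ r) (hm : 2 ≤ m) :
    W r α (m / α) := by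
  have hneg : W r α (ladder m (-m) / α) := by
    refine div_of_replicate (n := m + 1) hα (two_mul_div hα hαsq hr) (by positivity) ?_
      (ladder_nonneg m _) (by omega) (by omega)
    rw [ladder_neg_natCast (by omega), hαsq]
    push_cast
    field_simp
    ring
  rw [← ladder_neg_two]
  exact ladder_div_of_le hα hαsq hr hneg (by omega) (Or.inr (by norm_num))

theorem natCast_div_of_le (hα : 0 < α) (hαsq : α ^ 2 = 4 * m) (hr : m + 2 ≤ r) {s : ℕ}
    (hs1 : m ≤ s) (hs2 : s ≤ 4 * m) : W r α (s / α) := by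
  have hm := natCast_pos_of_sq_eq hα hαsq
  obtain rfl | hs := eq_or_lt_of_le hs2
  · rw [Nat.cast_mul, Nat.cast_ofNat, ← hαsq]
    exact div_self_sq hα
  set d := 4 * m - s
  set a := d / 4
  set b := d % 4 / 2
  set c := d % 2
  have hd : (s : ℝ) + (4 * a + 2 * b + c) = 4 * m := by
    exact_mod_cast (show s + (4 * a + 2 * b + c) = 4 * m by omega)
  refine div_of_multiset hα (Multiset.replicate a (m : ℝ) + Multiset.replicate b (2 * m : ℝ)
    + Multiset.replicate c (4 * m : ℝ)) ?_ ?_ ?_ (Nat.cast_nonneg s) ?_ ?_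
  · simp only [Multiset.mem_add, Multiset.mem_replicate]
    rintro x ((⟨ha, rfl⟩ | ⟨-, rfl⟩) | ⟨-, rfl⟩)
    · -- `a ≠ 0` forces `4 ≤ 4m - s ≤ 3m`
      exact natCast_div hα hαsq hr (by omega)
    · exact two_mul_div hα hαsq hr
    · rw [← hαsq]
      exact div_self_sq hα
  · simp only [Multiset.mem_add, Multiset.mem_replicate]
    rintro x ((⟨-, rfl⟩ | ⟨-, rfl⟩) | ⟨-, rfl⟩) <;> positivity
  · simp only [Multiset.map_add, Multiset.map_replicate, Multiset.sum_add,
      Multiset.sum_replicate, nsmul_eq_mul, hαsq]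
    field_simp
    linear_combination 2 * hd
  · simp only [Multiset.card_add, Multiset.card_replicate]
    omega
  · simp only [Multiset.card_add, Multiset.card_replicate]
    omega

end W

theorem stmt_11 (m : ℕ) (hm : 0 < m) (s : ℕ) (hs1 : m ≤ s) (hs2 : s ≤ 4 * m) :
    W (m + 2) (2 * Real.sqrt m) ((s : ℝ) / (2 * Real.sqrt m)) := by
  have hα : 0 < 2 * Real.sqrt m := by positivity
  have hαsq : (2 * Real.sqrt m) ^ 2 = 4 * m := by
    rw [mul_pow, Real.sq_sqrt m.cast_nonneg]
    norm_num
  exact W.natCast_div_of_le hα hαsq le_rfl hs1 hs2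
end

section
/- If there exists a multiset {q_1,…,q_r} of positive elements of W_r(α) with Σ_{i=1}^r q_i^{-1} = α, then there exists a tree T with Δ(T) = r and ρ(T) = α. -/
open scoped BigOperators

/-!
Call a tree rooted at `o`, with positive vertex weights `x` and `x o = 1`, a branch of defect `β`
if `A x = α x` holds at every vertex except the root, where `(A x) o = α - β`. A single vertex is
a branch of defect `α`. Hanging branches of defects `q₁, …, q_s` below a new root, the `i`-th one
with its weights scaled by `qᵢ⁻¹`, gives a branch of defect `α - ∑ qᵢ⁻¹`: at the old root of the
`i`-th branch the new parent contributes `1 = qᵢ · qᵢ⁻¹`, exactly the missing defect. For `β > 0`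
the bound `s ≤ r - ⌈β / (β + 1)⌉` reads `s < r`, which leaves room for the parent edge, so every
positive element of `W_r(α)` is the defect of a branch with degrees at most `r` and root degree
below `r`. The hypothesis then yields a branch of defect `0` whose root has degree `r`: a tree of
maximum degree `r` carrying a positive eigenvector for `α`. Since the adjacency matrix is
nonnegative and symmetric, pairing any eigenvector `y` with this positive one shows `|μ| ≤ α`.
-/

open Finset Matrix

theorem Matrix.abs_le_of_pos_eigenvector {ι : Type*} [Fintype ι] {A : Matrix ι ι ℝ}
    (hA : ∀ i j, 0 ≤ A i j) (hAT : Aᵀ = A) {x : ι → ℝ} (hx : ∀ i, 0 < x i) {α : ℝ}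
    (hAx : A *ᵥ x = α • x) {μ : ℝ} {y : ι → ℝ} (hy : y ≠ 0) (hAy : A *ᵥ y = μ • y) :
    |μ| ≤ α := by
  set z : ι → ℝ := fun i => |y i|
  have hz : ∀ i, |μ| * z i ≤ (A *ᵥ z) i := fun i => by
    calc |μ| * z i = |(A *ᵥ y) i| := by simp [hAy, z, abs_mul]
      _ ≤ ∑ j, |A i j * y j| := abs_sum_le_sum_abs _ _
      _ = (A *ᵥ z) i := by simp [mulVec, dotProduct, z, abs_mul, abs_of_nonneg (hA i _)]
  have hxz : 0 < x ⬝ᵥ z := by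
    obtain ⟨i, hi⟩ := Function.ne_iff.mp hy
    exact sum_pos' (fun j _ => mul_nonneg (hx j).le (abs_nonneg _))
      ⟨i, mem_univ _, mul_pos (hx i) (abs_pos.mpr hi)⟩
  refine le_of_mul_le_mul_right ?_ hxz
  calc |μ| * (x ⬝ᵥ z) = ∑ i, x i * (|μ| * z i) := by
        simp only [dotProduct, mul_sum, mul_left_comm]
    _ ≤ ∑ i, x i * (A *ᵥ z) i := sum_le_sum fun i _ => mul_le_mul_of_nonneg_left (hz i) (hx i).le
    _ = (Aᵀ *ᵥ x) ⬝ᵥ z := by rw [mulVec_transpose, ← dotProduct_mulVec]; rfl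
    _ = α * (x ⬝ᵥ z) := by rw [hAT, hAx, smul_dotProduct, smul_eq_mul]

theorem specRad_eq_of_pos_eigenvector {V : Type} [Fintype V] [DecidableEq V] [Nonempty V]
    (G : SimpleGraph V) [DecidableRel G.Adj] {x : V → ℝ} (hx : ∀ v, 0 < x v) {α : ℝ}
    (hGx : G.adjMatrix ℝ *ᵥ x = α • x) : specRad G = α := by
  refine IsGreatest.csSup_eq ⟨?_, fun μ hμ => ?_⟩
  · refine Module.End.hasEigenvalue_of_hasEigenvector (x := x) ⟨?_, fun h => ?_⟩
    · rw [Module.End.mem_eigenspace_iff, toLin'_apply, hGx]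
    · exact (hx (Classical.arbitrary V)).ne' (congrFun h _)
  · obtain ⟨y, hy⟩ := Module.End.HasEigenvalue.exists_hasEigenvector hμ
    rw [Module.End.hasEigenvector_iff, Module.End.mem_eigenspace_iff, toLin'_apply] at hy
    have hA (v w : V) : 0 ≤ G.adjMatrix ℝ v w := by
      rw [SimpleGraph.adjMatrix_apply]
      exact ite_nonneg zero_le_one le_rfl
    exact (le_abs_self μ).trans <|
      abs_le_of_pos_eigenvector hA G.transpose_adjMatrix hx hGx hy.2 hy.1

namespace SimpleGraph

variable {V W : Type*} {M : Type*} [AddCommMonoid M]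

theorem IsTree.sum_sup_edge [Finite V] [Finite W] {G : SimpleGraph V} {H : SimpleGraph W}
    (hG : G.IsTree) (hH : H.IsTree) (a : V) (b : W) :
    (G.sum H ⊔ edge (.inl a) (.inr b)).IsTree := by
  rw [isTree_iff_connected_and_card] at *
  refine ⟨hG.1.sum_sup_edge hH.1, ?_⟩
  have hab : s(Sum.inl a, Sum.inr b) ∉ (G.sum H).edgeSet :=
    not_adj_sum_inl_inr (G := G) (H := H) a b
  rw [edgeSet_sup, edgeSet_edge_of_ne Sum.inl_ne_inr, Set.union_singleton, Nat.card_coe_set_eq,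
    Set.ncard_insert_of_notMem hab, ← Nat.card_coe_set_eq, Nat.card_congr edgeSetSumEquiv,
    Nat.card_sum, Nat.card_sum]
  omega

section Fintype

variable [Fintype V] [Fintype W]

theorem Iso.sum_neighborFinset {G : SimpleGraph V} {G' : SimpleGraph W} [DecidableRel G.Adj]
    [DecidableRel G'.Adj] (φ : G ≃g G') (y : W → M) (v : V) :
    ∑ w ∈ G'.neighborFinset (φ v), y w = ∑ u ∈ G.neighborFinset v, y (φ u) :=
  (Finset.sum_equiv φ.toEquiv (by simp [φ.map_adj_iff]) (by simp)).symm

variable {G : SimpleGraph V} {H : SimpleGraph W}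
  (a : V) (b : W) [DecidableRel (G.sum H ⊔ edge (.inl a) (.inr b)).Adj]

theorem sum_neighborFinset_sum_sup_edge_inl [DecidableRel G.Adj] [DecidableEq V]
    (y : V ⊕ W → M) (v : V) :
    ∑ w ∈ (G.sum H ⊔ edge (.inl a) (.inr b)).neighborFinset (.inl v), y w =
      ∑ u ∈ G.neighborFinset v, y (.inl u) + if v = a then y (.inr b) else 0 := by
  classical
  simp only [neighborFinset_eq_filter, Finset.sum_filter, Fintype.sum_sum_type]
  congr 1
  · simp [edge_adj]
  · have hadj (u : W) :
        (G.sum H ⊔ edge (.inl a) (.inr b)).Adj (.inl v) (.inr u) ↔ v = a ∧ u = b := by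
      simp [edge_adj]
    rw [Finset.sum_congr rfl fun u _ => if_congr (hadj u) rfl rfl]
    split_ifs with h <;> simp [h]

theorem sum_neighborFinset_sum_sup_edge_inr [DecidableRel H.Adj] [DecidableEq W]
    (y : V ⊕ W → M) (w : W) :
    ∑ u ∈ (G.sum H ⊔ edge (.inl a) (.inr b)).neighborFinset (.inr w), y u =
      (if w = b then y (.inl a) else 0) + ∑ u ∈ H.neighborFinset w, y (.inr u) := by
  classical
  simp only [neighborFinset_eq_filter, Finset.sum_filter, Fintype.sum_sum_type]
  congr 1
  · have hadj (u : V) :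
        (G.sum H ⊔ edge (.inl a) (.inr b)).Adj (.inr w) (.inl u) ↔ w = b ∧ u = a := by
      simp [edge_adj]
    rw [Finset.sum_congr rfl fun u _ => if_congr (hadj u) rfl rfl]
    split_ifs with h <;> simp [h]
  · simp [edge_adj]

theorem degree_sum_sup_edge_inl [DecidableRel G.Adj] [DecidableEq V] (v : V) :
    (G.sum H ⊔ edge (.inl a) (.inr b)).degree (.inl v) = G.degree v + if v = a then 1 else 0 := by
  simp only [← card_neighborFinset_eq_degree, Finset.card_eq_sum_ones,
    sum_neighborFinset_sum_sup_edge_inl]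

theorem degree_sum_sup_edge_inr [DecidableRel H.Adj] [DecidableEq W] (w : W) :
    (G.sum H ⊔ edge (.inl a) (.inr b)).degree (.inr w) = (if w = b then 1 else 0) + H.degree w := by
  simp only [← card_neighborFinset_eq_degree, Finset.card_eq_sum_ones,
    sum_neighborFinset_sum_sup_edge_inr]

end Fintype

structure IsBranch {V : Type*} [Fintype V] (G : SimpleGraph V) [DecidableRel G.Adj] (r : ℕ)
    (α β : ℝ) (d : ℕ) (o : V) (x : V → ℝ) : Prop where
  isTree : G.IsTree
  weight_pos : ∀ v, 0 < x v
  weight_root : x o = 1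
  sum_neighborFinset : ∀ v ≠ o, ∑ w ∈ G.neighborFinset v, x w = α * x v
  sum_neighborFinset_root : ∑ w ∈ G.neighborFinset o, x w = α - β
  degree_le : ∀ v ≠ o, G.degree v ≤ r
  degree_root : G.degree o = d

section Branch

variable [Fintype V] [Fintype W] {G : SimpleGraph V} {H : SimpleGraph W}
  [DecidableRel G.Adj] [DecidableRel H.Adj] {r d e : ℕ} {α β γ : ℝ} {o : V} {x : V → ℝ}

theorem isBranch_bot (r : ℕ) (α : ℝ) : (⊥ : SimpleGraph (Fin 1)).IsBranch r α α 0 0 1 where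
  isTree := .of_subsingleton
  weight_pos _ := one_pos
  weight_root := rfl
  sum_neighborFinset v hv := absurd (Subsingleton.elim v 0) hv
  sum_neighborFinset_root := by simp
  degree_le v hv := absurd (Subsingleton.elim v 0) hv
  degree_root := by simp

theorem IsBranch.map_iso (hB : G.IsBranch r α β d o x) (φ : G ≃g H) :
    H.IsBranch r α β d (φ o) (x ∘ φ.symm) where
  isTree := φ.isTree_iff.mp hB.isTree
  weight_pos _ := hB.weight_pos _
  weight_root := by simpa using hB.weight_root
  sum_neighborFinset w hw := by
    obtain ⟨v, rfl⟩ := φ.surjective w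
    simpa [φ.sum_neighborFinset] using hB.sum_neighborFinset v (by simpa using hw)
  sum_neighborFinset_root := by simpa [φ.sum_neighborFinset] using hB.sum_neighborFinset_root
  degree_le w hw := by
    obtain ⟨v, rfl⟩ := φ.surjective w
    simpa [φ.degree_eq] using hB.degree_le v (by simpa using hw)
  degree_root := by rw [φ.degree_eq, hB.degree_root]

theorem IsBranch.sum_sup_edge {c : W} {y : W → ℝ} {q : ℝ} (hB : G.IsBranch r α γ d o x)
    (hC : H.IsBranch r α q e c y) (hq : 0 < q) (he : e < r)
    [DecidableRel (G.sum H ⊔ edge (.inl o) (.inr c)).Adj] :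
    (G.sum H ⊔ edge (.inl o) (.inr c)).IsBranch r α (γ - q⁻¹) (d + 1) (.inl o)
      (Sum.elim x (q⁻¹ • y)) where
  isTree := hB.isTree.sum_sup_edge hC.isTree o c
  weight_pos
    | .inl v => hB.weight_pos v
    | .inr w => mul_pos (inv_pos.mpr hq) (hC.weight_pos w)
  weight_root := hB.weight_root
  sum_neighborFinset
    | .inl v, hv => by
      classical
      have hv : v ≠ o := fun h => hv (congrArg _ h)
      rw [sum_neighborFinset_sum_sup_edge_inl]
      simp [hv, hB.sum_neighborFinset v hv]
    | .inr w, _ => by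
      classical
      rw [sum_neighborFinset_sum_sup_edge_inr]
      by_cases hw : w = c
      · subst hw
        simp [← Finset.mul_sum, hC.sum_neighborFinset_root, hB.weight_root, hC.weight_root]
        field_simp
        ring
      · simp [hw, ← Finset.mul_sum, hC.sum_neighborFinset w hw]
        ring
  sum_neighborFinset_root := by
    classical
    rw [sum_neighborFinset_sum_sup_edge_inl]
    simp [hB.sum_neighborFinset_root, hC.weight_root]
    ring
  degree_le
    | .inl v, hv => by
      classical
      have hv : v ≠ o := fun h => hv (congrArg _ h)
      simpa [degree_sum_sup_edge_inl, hv] using hB.degree_le v hv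
    | .inr w, _ => by
      classical
      rw [degree_sum_sup_edge_inr]
      by_cases hw : w = c
      · subst hw; simp [hC.degree_root]; omega
      · simpa [hw] using hC.degree_le w hw
  degree_root := by
    classical
    simp [degree_sum_sup_edge_inl, hB.degree_root]

theorem IsBranch.adjMatrix_mulVec (hB : G.IsBranch r α 0 d o x) : G.adjMatrix ℝ *ᵥ x = α • x := by
  ext v
  rw [adjMatrix_mulVec_apply, Pi.smul_apply, smul_eq_mul]
  by_cases hv : v = o
  · rw [hv, hB.sum_neighborFinset_root, hB.weight_root, sub_zero, mul_one]
  · exact hB.sum_neighborFinset v hv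

theorem IsBranch.maxDegree_eq (hB : G.IsBranch r α β r o x) : G.maxDegree = r := by
  refine le_antisymm (maxDegree_le_of_forall_degree_le _ _ fun v => ?_) ?_
  · by_cases hv : v = o
    · rw [hv, hB.degree_root]
    · exact hB.degree_le v hv
  · exact hB.degree_root ▸ degree_le_maxDegree G o

end Branch

end SimpleGraph

open SimpleGraph

def HasBranch (r : ℕ) (α β : ℝ) (d : ℕ) : Prop :=
  ∃ (n : ℕ) (G : SimpleGraph (Fin n)) (_ : DecidableRel G.Adj) (o : Fin n) (x : Fin n → ℝ),
    G.IsBranch r α β d o x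

theorem hasBranch_self (r : ℕ) (α : ℝ) : HasBranch r α α 0 :=
  ⟨1, ⊥, inferInstance, 0, 1, isBranch_bot r α⟩

theorem HasBranch.sub_inv {r d e : ℕ} {α γ q : ℝ} (hB : HasBranch r α γ d) (hC : HasBranch r α q e)
    (hq : 0 < q) (he : e < r) : HasBranch r α (γ - q⁻¹) (d + 1) := by
  classical
  obtain ⟨n, G, _, o, x, hB⟩ := hB
  obtain ⟨m, H, _, c, y, hC⟩ := hC
  exact ⟨n + m, _, _, _, _, (hB.sum_sup_edge hC hq he).map_iso (.map finSumFinEquiv _)⟩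

theorem hasBranch_sub_sum_inv {r s : ℕ} {α : ℝ} (q : Fin s → ℝ) (hq : ∀ i, 0 < q i)
    (h : ∀ i, ∃ e < r, HasBranch r α (q i) e) : HasBranch r α (α - ∑ i, (q i)⁻¹) s := by
  induction s with
  | zero => simpa using hasBranch_self r α
  | succ s ih =>
    obtain ⟨e, he, hC⟩ := h (Fin.last s)
    rw [Fin.sum_univ_castSucc, ← sub_sub]
    exact (ih _ (fun i => hq _) fun i => h _).sub_inv hC (hq _) he

theorem W.exists_hasBranch {r : ℕ} (hr : 0 < r) {α β : ℝ} (hβ : W r α β) (hβpos : 0 < β) :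
    ∃ d < r, HasBranch r α β d := by
  induction hβ with
  | base => exact ⟨0, hr, hasBranch_self r α⟩
  | step s q β _ hqpos hβeq _ _ hs ih =>
    have hceil : ⌈β / (β + 1)⌉ = 1 := by
      rw [Int.ceil_eq_iff, Int.cast_one, sub_self, div_le_one (by positivity)]
      exact ⟨by positivity, by linarith⟩
    exact ⟨s, by omega, hβeq ▸ hasBranch_sub_sum_inv q hqpos fun i => ih i (hqpos i)⟩

theorem stmt_16_general (r : ℕ) (hr : 0 < r) (α : ℝ)
    (q : Fin r → ℝ) (hq : ∀ i, W r α (q i)) (hqpos : ∀ i, 0 < q i)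
    (hsum : ∑ i, (q i)⁻¹ = α) :
    ∃ (n : ℕ) (G : SimpleGraph (Fin n)) (_ : DecidableRel G.Adj),
      G.IsTree ∧ 2 ≤ n ∧ G.maxDegree = r ∧ specRad G = α := by
  obtain ⟨n, G, _, o, x, hB⟩ :=
    hasBranch_sub_sum_inv q hqpos fun i => (hq i).exists_hasBranch hr (hqpos i)
  rw [hsum, sub_self] at hB
  have : Nonempty (Fin n) := ⟨o⟩
  have : Nontrivial (Fin n) := nontrivial_of_degree_ne_zero (hB.degree_root ▸ hr.ne')
  exact ⟨n, G, _, hB.isTree, Fin.nontrivial_iff_two_le.mp ‹_›, hB.maxDegree_eq,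
    specRad_eq_of_pos_eigenvector G hB.weight_pos hB.adjMatrix_mulVec⟩

theorem stmt_16 (r : ℕ) (hr : 0 < r) (α : ℝ) (hα : 0 < α)
    (q : Fin r → ℝ) (hq : ∀ i, W r α (q i)) (hqpos : ∀ i, 0 < q i)
    (hsum : ∑ i, (q i)⁻¹ = α) :
    ∃ (n : ℕ) (G : SimpleGraph (Fin n)) (_ : DecidableRel G.Adj),
      G.IsTree ∧ 2 ≤ n ∧ G.maxDegree = r ∧ specRad G = α :=
  stmt_16_general r hr α q hq hqpos hsum
end
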